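/- arXiv:2409.11268 — 3 statements merged into one kernel-verified Lean document; each statement's English description precedes it below -/
import Mathlib

section
/- For all n ≥ 0, as an identity of integers, (n-2)·a_n = Σ_{k=1}^{n} (β(k) + 2)·a_{n-k}, where β(k) = Σ_{2^i | k} 2^i is the sum of the divisors of k that are powers of 2. -/
/-- `pre2 s` is the multiset of all pairwise products of two distinct entries
(by position) of the multiset `s`, i.e. the summands of `e₂` evaluated at `s`. -/
def pre2 (s : Multiset ℕ) : Multiset ℕ := (Multiset.powersetCard 2 s).map Multiset.prod

open Classical in
/-- The finset of binary partitions of `n`: partitions all of whose parts are powers of 2. -/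
noncomputable def binaryPartitions (n : ℕ) : Finset (Nat.Partition n) :=
  Finset.univ.filter fun l => ∀ p ∈ l.parts, ∃ i : ℕ, p = 2 ^ i

/-- `a n = m₁(ImB₂(n))`: the total number of parts equal to 1 in the image of `pre2`
on binary partitions of `n` with at least two parts; by injectivity this equals
`∑_{λ ∈ B(n)} C(m₁(λ), 2)`. -/
noncomputable def a (n : ℕ) : ℕ :=
  ∑ l ∈ binaryPartitions n, Nat.choose (l.parts.count 1) 2

open Classical in
/-- `beta k` is the sum of the divisors of `k` that are powers of 2. -/
noncomputable def beta (k : ℕ) : ℕ :=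
  ∑ d ∈ (Nat.divisors k).filter (fun d => ∃ i : ℕ, d = 2 ^ i), d


/-!
Weight each `λ ∈ B(n)` by `C(m₁(λ), 2)` and expand `n = ∑ᵢ 2ⁱ m_{2ⁱ}(λ)`: then
`n aₙ = ∑ᵢ 2ⁱ ∑_λ m_{2ⁱ}(λ) C(m₁(λ), 2)`. Write `m_q(λ)` as the number of `j ≥ 1` with
`j ≤ m_q(λ)`; deleting `j` parts equal to `q` is a bijection onto `B(n - jq)`. For `q = 2ⁱ > 1`
it preserves `m₁`, so the inner sum is `∑_{j ≥ 1} a(n - jq)`, and regrouping by `k = jq` gives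
`∑_k (β(k) - 1) a(n - k)`. For `q = 1` the weight changes, and `m C(m,2) = 3 C(m,3) + 2 C(m,2)`
together with `C(m,3) = ∑_{j=1}^{m} C(m-j, 2)` gives `3 ∑_k a(n - k) + 2 aₙ`.
-/

open Finset

lemma sum_sum_Icc_comm {ι M : Type*} [AddCommMonoid M] (s : Finset ι) (c : ι → ℕ) {N : ℕ}
    (hc : ∀ l ∈ s, c l ≤ N) (F : ι → ℕ → M) :
    ∑ l ∈ s, ∑ j ∈ Icc 1 (c l), F l j = ∑ j ∈ Icc 1 N, ∑ l ∈ s with j ≤ c l, F l j :=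
  sum_comm' fun l j => by
    simp only [mem_Icc, mem_filter]
    constructor
    · rintro ⟨hl, h1, hj⟩
      exact ⟨⟨hl, hj⟩, h1, hj.trans (hc l hl)⟩
    · rintro ⟨⟨hl, hj⟩, h1, -⟩
      exact ⟨hl, h1, hj⟩

lemma sum_Icc_mul_eq_sum_filter_dvd {M : Type*} [AddCommMonoid M] (g : ℕ → M) {d : ℕ}
    (hd : 0 < d) (n : ℕ) : ∑ j ∈ Icc 1 (n / d), g (j * d) = ∑ k ∈ Icc 1 n with d ∣ k, g k := by
  have : {k ∈ Icc 1 n | d ∣ k} = (Icc 1 (n / d)).map ⟨(· * d), mul_left_injective₀ hd.ne'⟩ := by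
    ext k
    simp only [mem_filter, mem_Icc, mem_map, Function.Embedding.coeFn_mk,
      Nat.le_div_iff_mul_le hd, dvd_iff_exists_eq_mul_left]
    constructor
    · rintro ⟨⟨h1, hn⟩, j, rfl⟩
      exact ⟨j, ⟨Nat.pos_of_mul_pos_right h1, hn⟩, rfl⟩
    · rintro ⟨j, ⟨h1, hn⟩, rfl⟩
      exact ⟨⟨Nat.mul_pos h1 hd, hn⟩, j, rfl⟩
  rw [this, sum_map]
  rfl

lemma Nat.mul_choose_two (m : ℕ) : m * m.choose 2 = 3 * m.choose 3 + 2 * m.choose 2 := by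
  have h := Nat.choose_succ_right_eq m 2
  rcases Nat.lt_or_ge m 2 with hm | hm
  · simp [Nat.choose_eq_zero_of_lt hm, Nat.choose_eq_zero_of_lt (hm.trans (by norm_num : 2 < 3))]
  · obtain ⟨k, rfl⟩ := Nat.exists_eq_add_of_le' hm
    simp only [Nat.add_sub_cancel] at h
    linarith

lemma Nat.choose_three_eq_sum_Icc (m : ℕ) : m.choose 3 = ∑ j ∈ Icc 1 m, (m - j).choose 2 := by
  have h := sum_Ico_reflect (fun t => t.choose 2) 1 (le_refl (m + 1))
  simp only [Ico_add_one_right_eq_Icc, Nat.add_sub_cancel, Nat.sub_self,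
    Nat.Ico_zero_eq_range] at h
  rw [h]
  clear h
  induction m with
  | zero => rfl
  | succ m ih => rw [sum_range_succ, ← ih, Nat.choose_succ_succ', add_comm]

lemma Nat.Partition.count_le_div {n q : ℕ} (l : n.Partition) (hq : 0 < q) :
    l.parts.count q ≤ n / q := by
  obtain ⟨u, hu⟩ := Multiset.le_iff_exists_add.1
    (Multiset.le_count_iff_replicate_le.1 (le_refl (l.parts.count q)))
  have := congrArg Multiset.sum hu
  simp only [l.parts_sum, Multiset.sum_add, Multiset.sum_replicate, smul_eq_mul] at this
  exact (Nat.le_div_iff_mul_le hq).2 (by omega)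

lemma mem_binaryPartitions {n : ℕ} {l : n.Partition} :
    l ∈ binaryPartitions n ↔ ∀ p ∈ l.parts, ∃ i : ℕ, p = 2 ^ i := by
  classical
  simp [binaryPartitions]

lemma sum_binaryPartitions_filter_le_count {M : Type*} [AddCommMonoid M]
    (f : Multiset ℕ → M) {m n q j : ℕ} (hq : ∃ i, q = 2 ^ i) (hn : m + j * q = n) :
    ∑ l ∈ binaryPartitions n with j ≤ l.parts.count q, f l.parts =
      ∑ μ ∈ binaryPartitions m, f (μ.parts + Multiset.replicate j q) := by
  have hq0 : 0 < q := by obtain ⟨i, rfl⟩ := hq; positivity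
  have hrep {l : n.Partition} (hl : l ∈ {l ∈ binaryPartitions n | j ≤ l.parts.count q}) :
      Multiset.replicate j q ≤ l.parts :=
    Multiset.le_count_iff_replicate_le.1 (mem_filter.1 hl).2
  refine sum_bij'
    (fun l hl => ⟨l.parts - Multiset.replicate j q,
      fun hp => l.parts_pos (Multiset.mem_of_le tsub_le_self hp), ?_⟩)
    (fun μ _ => ⟨μ.parts + Multiset.replicate j q, ?_, ?_⟩) ?_ ?_ ?_ ?_ ?_
  · have := congrArg Multiset.sum (tsub_add_cancel_of_le (hrep hl))
    simp only [Multiset.sum_add, Multiset.sum_replicate, smul_eq_mul, l.parts_sum] at this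
    omega
  · intro p hp
    rcases Multiset.mem_add.1 hp with hp | hp
    · exact μ.parts_pos hp
    · rwa [Multiset.eq_of_mem_replicate hp]
  · simp only [Multiset.sum_add, Multiset.sum_replicate, smul_eq_mul, μ.parts_sum]
    omega
  · intro l hl
    simp only [mem_binaryPartitions, mem_filter] at hl ⊢
    exact fun p hp => hl.1 p (Multiset.mem_of_le tsub_le_self hp)
  · intro μ hμ
    simp only [mem_binaryPartitions, mem_filter, Multiset.count_add,
      Multiset.count_replicate_self] at hμ ⊢
    refine ⟨fun p hp => ?_, by omega⟩
    rcases Multiset.mem_add.1 hp with hp | hp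
    · exact hμ p hp
    · rwa [Multiset.eq_of_mem_replicate hp]
  · exact fun l hl => Nat.Partition.ext (tsub_add_cancel_of_le (hrep hl))
  · exact fun μ _ => Nat.Partition.ext (add_tsub_cancel_right _ _)
  · exact fun l hl => by rw [tsub_add_cancel_of_le (hrep hl)]

lemma sum_range_two_pow_mul_count {n : ℕ} {l : n.Partition} (hl : l ∈ binaryPartitions n) :
    ∑ i ∈ range (n + 1), 2 ^ i * l.parts.count (2 ^ i) = n := by
  classical
  have hsub : l.parts.toFinset ⊆ (range (n + 1)).image (2 ^ ·) := by
    intro p hp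
    rw [Multiset.mem_toFinset] at hp
    obtain ⟨i, rfl⟩ := mem_binaryPartitions.1 hl p hp
    have := Nat.lt_two_pow_self (n := i)
    exact mem_image_of_mem _ (mem_range.2 (by linarith [l.le_of_mem_parts hp]))
  conv_rhs => rw [← l.parts_sum, Finset.sum_multiset_count_of_subset _ _ hsub,
    sum_image fun _ _ _ _ h => Nat.pow_right_injective le_rfl h]
  simp [mul_comm]

lemma beta_eq_sum_range {n k : ℕ} (hk : 0 < k) (hkn : k ≤ n) :
    beta k = ∑ i ∈ range (n + 1) with 2 ^ i ∣ k, 2 ^ i := by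
  classical
  have : {d ∈ k.divisors | ∃ i : ℕ, d = 2 ^ i} =
      {i ∈ range (n + 1) | 2 ^ i ∣ k}.image (2 ^ ·) := by
    ext d
    simp only [mem_filter, Nat.mem_divisors, mem_image, mem_range]
    constructor
    · rintro ⟨⟨hdk, -⟩, i, rfl⟩
      have := Nat.lt_two_pow_self (n := i)
      exact ⟨i, ⟨by linarith [Nat.le_of_dvd hk hdk], hdk⟩, rfl⟩
    · rintro ⟨i, ⟨-, hik⟩, rfl⟩
      exact ⟨⟨hik, hk.ne'⟩, i, rfl⟩
  rw [beta, this, sum_image fun _ _ _ _ h => Nat.pow_right_injective le_rfl h]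

lemma sum_count_mul_choose_of_ne_one {n q : ℕ} (hq : ∃ i, q = 2 ^ i) (hq1 : q ≠ 1) :
    ∑ l ∈ binaryPartitions n, l.parts.count q * (l.parts.count 1).choose 2 =
      ∑ j ∈ Icc 1 (n / q), a (n - j * q) := by
  have hq0 : 0 < q := by obtain ⟨i, rfl⟩ := hq; positivity
  calc _ = ∑ l ∈ binaryPartitions n, ∑ j ∈ Icc 1 (l.parts.count q),
          (l.parts.count 1).choose 2 := by
        simp
    _ = ∑ j ∈ Icc 1 (n / q), ∑ l ∈ binaryPartitions n with j ≤ l.parts.count q,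
          (l.parts.count 1).choose 2 :=
        sum_sum_Icc_comm _ _ (fun l _ => l.count_le_div hq0) _
    _ = _ := sum_congr rfl fun j hj => by
        rw [sum_binaryPartitions_filter_le_count (fun s => (s.count 1).choose 2) hq
          (Nat.sub_add_cancel ((Nat.le_div_iff_mul_le hq0).1 (mem_Icc.1 hj).2)), a]
        simp [Multiset.count_replicate, hq1]

lemma sum_count_one_mul_choose (n : ℕ) :
    ∑ l ∈ binaryPartitions n, l.parts.count 1 * (l.parts.count 1).choose 2 =
      3 * ∑ j ∈ Icc 1 n, a (n - j) + 2 * a n := by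
  calc _ = 3 * ∑ l ∈ binaryPartitions n, ∑ j ∈ Icc 1 (l.parts.count 1),
          (l.parts.count 1 - j).choose 2 + 2 * a n := by
        simp only [Nat.mul_choose_two, sum_add_distrib, ← mul_sum, Nat.choose_three_eq_sum_Icc, a]
    _ = 3 * ∑ j ∈ Icc 1 n, ∑ l ∈ binaryPartitions n with j ≤ l.parts.count 1,
          (l.parts.count 1 - j).choose 2 + 2 * a n := by
        rw [sum_sum_Icc_comm _ _ (fun l _ => (l.count_le_div one_pos).trans_eq (Nat.div_one n))]
    _ = _ := by
        congr 2
        refine sum_congr rfl fun j hj => ?_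
        rw [sum_binaryPartitions_filter_le_count (q := 1) (fun s => (s.count 1 - j).choose 2)
          ⟨0, rfl⟩ (by simpa using Nat.sub_add_cancel (mem_Icc.1 hj).2), a]
        simp

lemma sum_beta_mul (n : ℕ) :
    ∑ k ∈ Icc 1 n, beta k * a (n - k) =
      ∑ i ∈ range (n + 1), 2 ^ i * ∑ j ∈ Icc 1 (n / 2 ^ i), a (n - j * 2 ^ i) := by
  calc _ = ∑ k ∈ Icc 1 n, ∑ i ∈ range (n + 1) with 2 ^ i ∣ k, 2 ^ i * a (n - k) :=
        sum_congr rfl fun k hk => by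
          rw [beta_eq_sum_range (mem_Icc.1 hk).1 (mem_Icc.1 hk).2, sum_mul]
    _ = ∑ i ∈ range (n + 1), ∑ k ∈ Icc 1 n with 2 ^ i ∣ k, 2 ^ i * a (n - k) :=
        sum_comm' fun k i => by simp only [mem_filter]; tauto
    _ = _ := sum_congr rfl fun i _ => by
        rw [mul_sum]
        exact (sum_Icc_mul_eq_sum_filter_dvd (fun k => 2 ^ i * a (n - k)) (by positivity) n).symm

lemma mul_a_eq_sum_beta_add_two_mul (n : ℕ) :
    n * a n = ∑ k ∈ Icc 1 n, (beta k + 2) * a (n - k) + 2 * a n := by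
  let S i := ∑ j ∈ Icc 1 (n / 2 ^ i), a (n - j * 2 ^ i)
  have hS0 : S 0 = ∑ j ∈ Icc 1 n, a (n - j) := by simp [S]
  calc n * a n = ∑ l ∈ binaryPartitions n, ∑ i ∈ range (n + 1),
          2 ^ i * (l.parts.count (2 ^ i) * (l.parts.count 1).choose 2) := by
        rw [a, mul_sum]
        refine sum_congr rfl fun l hl => ?_
        calc n * (l.parts.count 1).choose 2
            = (∑ i ∈ range (n + 1), 2 ^ i * l.parts.count (2 ^ i)) *
                (l.parts.count 1).choose 2 := by
              rw [sum_range_two_pow_mul_count hl]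
          _ = _ := by simp only [sum_mul, mul_assoc]
    _ = ∑ i ∈ range (n + 1), 2 ^ i * S i + 2 * S 0 + 2 * a n := by
        rw [sum_comm]
        simp_rw [← mul_sum]
        rw [sum_range_succ', sum_range_succ' (fun i => 2 ^ i * S i)]
        have hS : ∀ i ∈ range n, ∑ l ∈ binaryPartitions n,
            l.parts.count (2 ^ (i + 1)) * (l.parts.count 1).choose 2 = S (i + 1) :=
          fun i _ => sum_count_mul_choose_of_ne_one ⟨i + 1, rfl⟩
            (Nat.one_lt_two_pow i.succ_ne_zero).ne'
        rw [sum_congr rfl fun i hi => by rw [hS i hi]]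
        simp only [pow_zero, one_mul, sum_count_one_mul_choose, hS0]
        ring
    _ = _ := by
        rw [hS0, ← sum_beta_mul]
        simp only [add_mul, sum_add_distrib, ← mul_sum]

theorem stmt_4 (n : ℕ) :
    ((n : ℤ) - 2) * (a n : ℤ) =
      ∑ k ∈ Finset.Icc 1 n, ((beta k : ℤ) + 2) * (a (n - k) : ℤ) := by
  have h : (n : ℤ) * a n = ∑ k ∈ Icc 1 n, ((beta k : ℤ) + 2) * a (n - k) + 2 * a n := by
    exact_mod_cast mul_a_eq_sum_beta_add_two_mul n
  linarith
end

section
/- For all n ≥ 0, b_n = Σ_{i ≥ 1} ⌊(i-1)/2⌋·|B(n-i)|, where the sum is over all integers i with 1 ≤ i ≤ n. -/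
/-- `b n = m₂(ImB₂(n))`: the total number of parts equal to 2 in the image of `pre2`
on binary partitions of `n` with at least two parts; by injectivity this equals
`∑_{λ ∈ B(n)} m₁(λ)·m₂(λ)`. -/
noncomputable def b (n : ℕ) : ℕ :=
  ∑ l ∈ binaryPartitions n, (l.parts.count 1) * (l.parts.count 2)

/-!
Writing `m₁ m₂` as the number of pairs `(x, y)` with `1 ≤ x ≤ m₁`, `1 ≤ y ≤ m₂` and swapping
the sums, `b n` counts pairs `(x, y)` together with a binary partition of `n` having at least
`x` ones and `y` twos. Removing those parts identifies such partitions with `B(n - x - 2y)`,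
and exactly `⌊(i - 1) / 2⌋` of the pairs have `x + 2y = i`.
-/

open Finset

theorem Multiset.replicate_add_replicate_le_iff {α : Type*} [DecidableEq α] {a c : α}
    (hac : a ≠ c) {s : Multiset α} {x y : ℕ} :
    replicate x a + replicate y c ≤ s ↔ x ≤ s.count a ∧ y ≤ s.count c := by
  refine ⟨fun h => ⟨le_count_iff_replicate_le.2 (le_trans (le_add_right _ _) h),
    le_count_iff_replicate_le.2 (le_trans (le_add_left _ _) h)⟩, fun ⟨hx, hy⟩ => ?_⟩
  rw [le_iff_count]
  intro d
  rw [count_add, count_replicate, count_replicate]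
  split_ifs <;> subst_vars <;> simp_all

namespace Nat.Partition

theorem mul_count_add_mul_count_le {n a c : ℕ} (hac : a ≠ c) (l : n.Partition) :
    a * l.parts.count a + c * l.parts.count c ≤ n := by
  obtain ⟨t, ht⟩ := Multiset.le_iff_exists_add.1
    ((Multiset.replicate_add_replicate_le_iff hac).2 ⟨le_rfl, le_rfl⟩ : _ ≤ l.parts)
  have hsum := congrArg Multiset.sum ht
  simp only [Multiset.sum_add, Multiset.sum_replicate, smul_eq_mul, l.parts_sum] at hsum
  rw [mul_comm a, mul_comm c]
  omega

theorem card_filter_le_parts_restricted {n : ℕ} (p : ℕ → Prop) [DecidablePred p]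
    {r : Multiset ℕ} (hr : ∀ i ∈ r, 0 < i ∧ p i) (hn : r.sum ≤ n) :
    #{l ∈ restricted n p | r ≤ l.parts} = #(restricted (n - r.sum) p) := by
  simp only [restricted, filter_filter]
  refine card_bij' (fun l hl => ⟨l.parts - r, fun hi => ?_, ?_⟩)
    (fun m _ => ⟨r + m.parts, fun hi => ?_, ?_⟩) ?_ ?_ ?_ ?_
  · exact l.parts_pos (Multiset.mem_of_le (Multiset.sub_le_self _ _) hi)
  · have hr := congrArg Multiset.sum (tsub_add_cancel_of_le (mem_filter.1 hl).2.2)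
    rw [Multiset.sum_add, l.parts_sum] at hr
    omega
  · exact (Multiset.mem_add.1 hi).elim (fun h => (hr _ h).1) m.parts_pos
  · rw [Multiset.sum_add, m.parts_sum]
    omega
  · intro l hl
    simp only [mem_filter, mem_univ, true_and] at hl ⊢
    exact fun i hi => hl.1 i (Multiset.mem_of_le (Multiset.sub_le_self _ _) hi)
  · intro m hm
    simp only [mem_filter, mem_univ, true_and, Multiset.mem_add] at hm ⊢
    exact ⟨fun i hi => hi.elim (fun h => (hr i h).2) (hm i), Multiset.le_add_right _ _⟩
  · intro l hl
    ext1
    exact add_tsub_cancel_of_le (mem_filter.1 hl).2.2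
  · intro m _
    ext1
    exact add_tsub_cancel_left _ _

end Nat.Partition

open Classical in
theorem binaryPartitions_eq_restricted (n : ℕ) :
    binaryPartitions n = Nat.Partition.restricted n (fun i => ∃ k, i = 2 ^ k) := by
  ext l
  simp [binaryPartitions, Nat.Partition.restricted]

theorem card_filter_le_count_one_two_binaryPartitions {n x y : ℕ} (h : x + 2 * y ≤ n) :
    #{l ∈ binaryPartitions n | x ≤ l.parts.count 1 ∧ y ≤ l.parts.count 2} =
      #(binaryPartitions (n - (x + 2 * y))) := by
  have hsum : (Multiset.replicate x 1 + Multiset.replicate y 2).sum = x + 2 * y := by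
    simp [Multiset.sum_replicate, mul_comm]
  simp only [binaryPartitions_eq_restricted,
    ← Multiset.replicate_add_replicate_le_iff (by decide : (1 : ℕ) ≠ 2)]
  rw [Nat.Partition.card_filter_le_parts_restricted, hsum]
  · simp only [Multiset.mem_add, Multiset.mem_replicate]
    rintro i (⟨-, rfl⟩ | ⟨-, rfl⟩)
    exacts [⟨one_pos, 0, rfl⟩, ⟨two_pos, 1, rfl⟩]
  · omega

def weightedPairs (n : ℕ) : Finset (ℕ × ℕ) :=
  {p ∈ Icc 1 n ×ˢ Icc 1 n | p.1 + 2 * p.2 ≤ n}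

theorem mul_eq_card_filter_weightedPairs {n a c : ℕ} (h : a + 2 * c ≤ n) :
    a * c = #{p ∈ weightedPairs n | p.1 ≤ a ∧ p.2 ≤ c} := by
  have : {p ∈ weightedPairs n | p.1 ≤ a ∧ p.2 ≤ c} = Icc 1 a ×ˢ Icc 1 c := by
    ext ⟨x, y⟩
    simp only [weightedPairs, mem_filter, mem_product, mem_Icc]
    omega
  simp [this]

theorem card_filter_weightedPairs_eq {n i : ℕ} (hi : i ≤ n) :
    #{p ∈ weightedPairs n | p.1 + 2 * p.2 = i} = (i - 1) / 2 := by
  have : {p ∈ weightedPairs n | p.1 + 2 * p.2 = i} =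
      (Icc 1 ((i - 1) / 2)).image fun y => (i - 2 * y, y) := by
    ext ⟨x, y⟩
    simp only [weightedPairs, mem_filter, mem_product, mem_Icc, mem_image, Prod.mk.injEq,
      exists_eq_right_right]
    omega
  rw [this, card_image_of_injective _ fun _ _ h => congrArg Prod.snd h, Nat.card_Icc,
    Nat.add_sub_cancel]

theorem sum_weightedPairs {M : Type*} [AddCommMonoid M] (n : ℕ) (f : ℕ → M) :
    ∑ p ∈ weightedPairs n, f (p.1 + 2 * p.2) = ∑ i ∈ Icc 1 n, ((i - 1) / 2) • f i := by
  have hmaps : ∀ p ∈ weightedPairs n, p.1 + 2 * p.2 ∈ Icc 1 n := by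
    intro p hp
    simp only [weightedPairs, mem_filter, mem_product, mem_Icc] at hp
    simp only [mem_Icc]
    omega
  rw [← sum_fiberwise_of_maps_to hmaps]
  refine sum_congr rfl fun i hi => ?_
  rw [sum_congr rfl fun p hp => congrArg f (mem_filter.1 hp).2, sum_const,
    card_filter_weightedPairs_eq (mem_Icc.1 hi).2]

theorem stmt_7 (n : ℕ) :
    b n = ∑ i ∈ Finset.Icc 1 n, ((i - 1) / 2) * (binaryPartitions (n - i)).card := by
  calc b n = ∑ l ∈ binaryPartitions n,
        #{p ∈ weightedPairs n | p.1 ≤ l.parts.count 1 ∧ p.2 ≤ l.parts.count 2} :=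
        sum_congr rfl fun l _ => mul_eq_card_filter_weightedPairs <| by
          simpa using l.mul_count_add_mul_count_le (by decide : (1 : ℕ) ≠ 2)
    _ = ∑ p ∈ weightedPairs n,
        #{l ∈ binaryPartitions n | p.1 ≤ l.parts.count 1 ∧ p.2 ≤ l.parts.count 2} :=
        sum_card_bipartiteAbove_eq_sum_card_bipartiteBelow _
    _ = ∑ p ∈ weightedPairs n, #(binaryPartitions (n - (p.1 + 2 * p.2))) :=
        sum_congr rfl fun p hp => card_filter_le_count_one_two_binaryPartitions (mem_filter.1 hp).2
    _ = _ := by simp only [sum_weightedPairs n fun i => #(binaryPartitions (n - i)), smul_eq_mul]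
end

section
/- For every integer d ≥ 2 and all n ≥ 0, a_n(d) = Σ_{i=0}^{⌊n/d⌋} C(n - d·i, 2)·|P(i, d)|, where C(m,2) = m(m-1)/2. -/
open Classical in
/-- The finset of `d`-ary partitions of `n`: partitions all of whose parts are powers of `d`. -/
noncomputable def daryPartitions (d n : ℕ) : Finset (Nat.Partition n) :=
  Finset.univ.filter fun l => ∀ p ∈ l.parts, ∃ i : ℕ, p = d ^ i

/-- `aD d n = m₁(ImP₂(n, d))`: the total number of parts equal to 1 in the image of `pre2`
on `d`-ary partitions of `n` with at least two parts; by injectivity this equals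
`∑_{λ ∈ P(n,d)} C(m₁(λ), 2)`. -/
noncomputable def aD (d n : ℕ) : ℕ :=
  ∑ l ∈ daryPartitions d n, Nat.choose (l.parts.count 1) 2

/-!
A `d`-ary partition of `n` with `k` parts equal to `1` is the same thing as `k` ones together with
`d` times a `d`-ary partition of `(n - k) / d`: the parts other than `1` are powers `d ^ (j + 1)`,
and dividing them by `d` is inverted by multiplying back. Hence the partitions of `n` with exactly
`n - d * i` ones are counted by `|P(i, d)|`, and grouping the sum defining `aD d n` by the number
of ones gives the formula.
-/

lemma Multiset.count_one_add_sum_filter_ne_one (s : Multiset ℕ) :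
    s.count 1 + (s.filter (· ≠ 1)).sum = s.sum := by
  conv_rhs => rw [← Multiset.filter_add_not (· = 1) s]
  rw [Multiset.sum_add, Multiset.filter_eq', Multiset.sum_replicate, smul_eq_mul, mul_one]

lemma Multiset.map_mul_map_div_cancel {d : ℕ} {s : Multiset ℕ} (h : ∀ p ∈ s, d ∣ p) :
    (s.map (· / d)).map (d * ·) = s := by
  rw [Multiset.map_map]
  conv_rhs => rw [← Multiset.map_id s]
  exact Multiset.map_congr rfl fun p hp => Nat.mul_div_cancel' (h p hp)

lemma Multiset.sum_map_mul_left' (d : ℕ) (s : Multiset ℕ) :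
    (s.map (d * ·)).sum = d * s.sum := by
  simpa using Multiset.sum_map_mul_left (a := d) (s := s) (f := id)

lemma mem_daryPartitions {d n : ℕ} {l : Nat.Partition n} :
    l ∈ daryPartitions d n ↔ ∀ p ∈ l.parts, ∃ i : ℕ, p = d ^ i := by
  simp [daryPartitions]

lemma dvd_of_mem_daryPartitions {d n : ℕ} {l : Nat.Partition n} (hl : l ∈ daryPartitions d n)
    {p : ℕ} (hp : p ∈ l.parts) (h1 : p ≠ 1) : d ∣ p := by
  obtain ⟨_ | j, rfl⟩ := mem_daryPartitions.1 hl p hp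
  · exact absurd (pow_zero d) h1
  · exact dvd_pow_self d j.succ_ne_zero

lemma sum_filter_ne_one_eq {n : ℕ} (l : Nat.Partition n) :
    (l.parts.filter (· ≠ 1)).sum = n - l.parts.count 1 := by
  have := l.parts.count_one_add_sum_filter_ne_one
  rw [l.parts_sum] at this
  omega

lemma dvd_sub_count_one {d n : ℕ} {l : Nat.Partition n} (hl : l ∈ daryPartitions d n) :
    d ∣ n - l.parts.count 1 := by
  rw [← sum_filter_ne_one_eq]
  refine Multiset.dvd_sum fun p hp => ?_
  rw [Multiset.mem_filter] at hp
  exact dvd_of_mem_daryPartitions hl hp.1 hp.2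

namespace Nat.Partition

def scaleAddOnes {i : ℕ} (n : ℕ) {d : ℕ} (hd : 0 < d) (hi : d * i ≤ n) (m : Nat.Partition i) :
    Nat.Partition n where
  parts := Multiset.replicate (n - d * i) 1 + m.parts.map (d * ·)
  parts_pos {p} hp := by
    rcases Multiset.mem_add.1 hp with h | h
    · rw [Multiset.eq_of_mem_replicate h]
      exact Nat.one_pos
    · obtain ⟨q, hq, rfl⟩ := Multiset.mem_map.1 h
      exact Nat.mul_pos hd (m.parts_pos hq)
  parts_sum := by
    rw [Multiset.sum_add, Multiset.sum_replicate, smul_eq_mul, mul_one,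
      Multiset.sum_map_mul_left', m.parts_sum]
    omega

variable {i n d : ℕ} (hd : 0 < d) (hi : d * i ≤ n)

lemma scaleAddOnes_injective : Function.Injective (scaleAddOnes n hd hi) := by
  intro m m' h
  have h' := congrArg Nat.Partition.parts h
  simp only [scaleAddOnes, add_right_inj] at h'
  exact Nat.Partition.ext (Multiset.map_injective (mul_right_injective₀ hd.ne') h')

lemma count_one_scaleAddOnes (hd1 : 1 < d) (m : Nat.Partition i) :
    (scaleAddOnes n hd hi m).parts.count 1 = n - d * i := by
  rw [scaleAddOnes, Multiset.count_add, Multiset.count_replicate_self,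
    Multiset.count_eq_zero.2, add_zero]
  intro h
  obtain ⟨q, hq, hq1⟩ := Multiset.mem_map.1 h
  have := m.parts_pos hq
  nlinarith

lemma scaleAddOnes_mem_daryPartitions {m : Nat.Partition i} (hm : m ∈ daryPartitions d i) :
    scaleAddOnes n hd hi m ∈ daryPartitions d n := by
  refine mem_daryPartitions.2 fun p hp => ?_
  rcases Multiset.mem_add.1 hp with h | h
  · exact ⟨0, by rw [Multiset.eq_of_mem_replicate h, pow_zero]⟩
  · obtain ⟨q, hq, rfl⟩ := Multiset.mem_map.1 h
    obtain ⟨k, rfl⟩ := mem_daryPartitions.1 hm q hq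
    exact ⟨k + 1, (_root_.pow_succ' d k).symm⟩

lemma exists_scaleAddOnes_eq {l : Nat.Partition n} (hl : l ∈ daryPartitions d n)
    (hcount : l.parts.count 1 = n - d * i) :
    ∃ m ∈ daryPartitions d i, scaleAddOnes n hd hi m = l := by
  set t := l.parts.filter (· ≠ 1)
  have hdvd : ∀ p ∈ t, d ∣ p := fun p hp =>
    dvd_of_mem_daryPartitions hl (Multiset.mem_filter.1 hp).1 (Multiset.mem_filter.1 hp).2
  have hsum : d * (t.map (· / d)).sum = d * i := by
    rw [← Multiset.sum_map_mul_left', Multiset.map_mul_map_div_cancel hdvd,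
      sum_filter_ne_one_eq, hcount]
    omega
  let m : Nat.Partition i :=
    { parts := t.map (· / d)
      parts_pos := fun {q} hq => by
        obtain ⟨p, hp, rfl⟩ := Multiset.mem_map.1 hq
        exact Nat.div_pos (Nat.le_of_dvd (l.parts_pos (Multiset.mem_filter.1 hp).1) (hdvd p hp)) hd
      parts_sum := Nat.eq_of_mul_eq_mul_left hd hsum }
  refine ⟨m, mem_daryPartitions.2 fun q hq => ?_, Nat.Partition.ext ?_⟩
  · obtain ⟨p, hp, rfl⟩ := Multiset.mem_map.1 hq
    obtain ⟨_ | k, rfl⟩ := mem_daryPartitions.1 hl p (Multiset.mem_filter.1 hp).1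
    · exact absurd (pow_zero d) (Multiset.mem_filter.1 hp).2
    · exact ⟨k, by rw [pow_succ, Nat.mul_div_cancel _ hd]⟩
  · change Multiset.replicate (n - d * i) 1 + (t.map (· / d)).map (d * ·) = l.parts
    rw [Multiset.map_mul_map_div_cancel hdvd, ← hcount, ← Multiset.filter_eq',
      Multiset.filter_add_not]

lemma filter_count_one_eq_map (hd1 : 1 < d) :
    (daryPartitions d n).filter (fun l => l.parts.count 1 = n - d * i) =
      (daryPartitions d i).map ⟨scaleAddOnes n hd hi, scaleAddOnes_injective hd hi⟩ := by
  ext l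
  simp only [Finset.mem_filter, Finset.mem_map, Function.Embedding.coeFn_mk]
  constructor
  · rintro ⟨hl, hcount⟩
    exact exists_scaleAddOnes_eq hd hi hl hcount
  · rintro ⟨m, hm, rfl⟩
    exact ⟨scaleAddOnes_mem_daryPartitions hd hi hm, count_one_scaleAddOnes hd hi hd1 m⟩

end Nat.Partition

lemma div_sub_count_one_eq_iff {d n i : ℕ} (hd : 0 < d) (hi : d * i ≤ n) {l : Nat.Partition n}
    (hl : l ∈ daryPartitions d n) :
    (n - l.parts.count 1) / d = i ↔ l.parts.count 1 = n - d * i := by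
  obtain ⟨k, hk⟩ := dvd_sub_count_one hl
  have hle : l.parts.count 1 ≤ n := by
    have := l.parts.count_one_add_sum_filter_ne_one
    rw [l.parts_sum] at this
    omega
  rw [hk, Nat.mul_div_cancel_left _ hd]
  constructor
  · rintro rfl; omega
  · intro h
    have : d * k = d * i := by omega
    exact Nat.eq_of_mul_eq_mul_left hd this

theorem stmt_16 (d : ℕ) (hd : 2 ≤ d) (n : ℕ) :
    aD d n = ∑ i ∈ Finset.range (n / d + 1),
      Nat.choose (n - d * i) 2 * (daryPartitions d i).card := by
  have hd0 : 0 < d := by omega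
  have hmaps : ∀ l ∈ daryPartitions d n,
      (n - l.parts.count 1) / d ∈ Finset.range (n / d + 1) := fun _ _ =>
    Finset.mem_range_succ_iff.2 (Nat.div_le_div_right (Nat.sub_le _ _))
  rw [aD, ← Finset.sum_fiberwise_of_maps_to hmaps]
  refine Finset.sum_congr rfl fun i hi => ?_
  have hi : d * i ≤ n :=
    (Nat.mul_le_mul_left d (Finset.mem_range_succ_iff.1 hi)).trans (Nat.mul_div_le n d)
  rw [Finset.filter_congr fun l hl => div_sub_count_one_eq_iff hd0 hi hl,
    Nat.Partition.filter_count_one_eq_map hd0 hi hd, Finset.sum_map]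
  simp only [Function.Embedding.coeFn_mk, Nat.Partition.count_one_scaleAddOnes hd0 hi hd,
    Finset.sum_const, smul_eq_mul, mul_comm]
end
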